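/- Let γ: F → F⊗_A F be a D-connection and ∇ the induced operator on R_+(F). Define T_0 := id_F and T_n := (1/n!)∇^n|_F : F → R^{n+1}(F). Then for every i ≥ 1, all a ∈ A, and all m ∈ F: T_i(am) = a·T_i(m) + Σ_{j=1}^{i} (1/j)·T_{j-1}(D(a))·T_{i-j}(m), where products are taken in R(F). In particular (T_0, T_1, T_2, …) is an extended D-connection. -/

import Mathlib

open scoped TensorProduct

noncomputable section

variable (A : Type) [CommRing A]
variable (F : Type) [AddCommGroup F] [Module A F]

/-- `n`-fold tensor power `T^n(F)`. -/
abbrev TPow (n : ℕ) := PiTensorProduct A (fun _ : Fin n => F)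

/-- The submodule of symmetry relations. -/
def symRel (n : ℕ) : Submodule A (TPow A F n) :=
  Submodule.span A
    {x | ∃ (m : Fin n → F) (e : Equiv.Perm (Fin n)),
      x = PiTensorProduct.tprod A m - PiTensorProduct.tprod A (m ∘ e)}

/-- Symmetric power `S^n(F)`. -/
abbrev SymPow (n : ℕ) := TPow A F n ⧸ symRel A F n

/-- Class of the word `m₀ ⋯ m_{n-1}` in `S^n(F)`. -/
def mkS {n : ℕ} (m : Fin n → F) : SymPow A F n :=
  Submodule.Quotient.mk (PiTensorProduct.tprod A m)

/-- Class of a list of elements of `F` in the symmetric power. -/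
def mkSL (l : List F) : SymPow A F l.length := mkS A F l.get

/-- `RPow A F n` is `R^{n+1}(F) = S^n(F) ⊗_A F`. -/
abbrev RPow (n : ℕ) := SymPow A F n ⊗[A] F

/-- Class of the word `m₀ ⋯ m_n` in `R^{n+1}(F) = S^n(F) ⊗ F`. -/
def mkR {n : ℕ} (m : Fin (n + 1) → F) : RPow A F n :=
  mkS A F (fun i : Fin n => m i.castSucc) ⊗ₜ[A] m (Fin.last n)

/-- The `i`-th "rotation" of the word `m` appearing in the definition of the
switch operator: `m_n m_{n-1} ⋯ m_{n-i+1} m_0 m_1 ⋯ m_{n-i}` (0-indexed). -/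
def rot {n : ℕ} (m : Fin (n + 1) → F) (i : ℕ) : Fin (n + 1) → F := fun j =>
  if j.val < i then m ⟨n - j.val, by have := j.isLt; omega⟩
  else m ⟨j.val - i, by have := j.isLt; omega⟩

/-- `σ` is the switch operator on `R^{n+1}(F)`:
`σ(m_0⋯m_n) = ∑_{i=1}^{n} m_n m_{n-1}⋯m_{n-i+1} m_0 m_1 ⋯ m_{n-i}`. -/
def IsSwitch (n : ℕ) (σ : RPow A F n →ₗ[A] RPow A F n) : Prop :=
  ∀ m : Fin (n + 1) → F,
    σ (mkR A F m) = ∑ i ∈ Finset.Icc 1 n, mkR A F (rot F m i)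

/-- `K^{n+1}(F) = σ*(R^{n+1}(F))`, described by its generators `σ*(m_0⋯m_n)`. -/
def KSub (n : ℕ) : Submodule A (RPow A F n) :=
  Submodule.span A
    {x | ∃ m : Fin (n + 1) → F,
      x = mkR A F m + ∑ i ∈ Finset.Icc 1 n, mkR A F (rot F m i)}

/-- `K²(F) ⊆ T²(F) = F ⊗ F`: the kernel of `T²(F) → Λ²(F)`, i.e. the image of `1 + σ`. -/
def K2Sub : Submodule A (F ⊗[A] F) :=
  Submodule.span A {x | ∃ u v : F, x = u ⊗ₜ[A] v + v ⊗ₜ[A] u}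

/-- The word `m₀ ⋯ m_{p-1} u m'₀ ⋯ m'_{q-1}`. -/
def joinWord {p q : ℕ} (m : Fin p → F) (u : F) (m' : Fin q → F) :
    Fin (p + q + 1) → F := fun j =>
  if h : j.val < p then m ⟨j.val, h⟩
  else if _h2 : j.val < p + 1 then u
  else m' ⟨j.val - (p + 1), by have := j.isLt; omega⟩

/-- The concatenated word `m₀ ⋯ m_{p-1} m'₀ ⋯ m'_{q-1}`. -/
def appendWord {p q : ℕ} (m : Fin p → F) (m' : Fin q → F) : Fin (p + q) → F := fun j =>
  if h : j.val < p then m ⟨j.val, h⟩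
  else m' ⟨j.val - p, by have := j.isLt; omega⟩

/-- `mul` is the multiplication `R^{p+1}(F) × R^{q+1}(F) → R^{p+q+2}(F)` of the graded
algebra `R(F)`, recorded with values in `∏ₖ R^{k+1}(F)`:
`(s ⊗ u)·(s' ⊗ v) = (s u s') ⊗ v`. -/
def IsMulR (mul : ∀ p q, RPow A F p →ₗ[A] RPow A F q →ₗ[A] ∀ k, RPow A F k) : Prop :=
  ∀ (p q : ℕ) (m : Fin p → F) (u : F) (m' : Fin q → F) (v : F),
    mul p q (mkS A F m ⊗ₜ[A] u) (mkS A F m' ⊗ₜ[A] v)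
      = Pi.single (p + q + 1) (mkS A F (joinWord F m u m') ⊗ₜ[A] v)

/-- `mul` is the multiplication `S^p(F) × S^q(F) → S^{p+q}(F)` of the symmetric algebra,
recorded with values in `∏ₖ S^k(F)`. -/
def IsMulS (mul : ∀ p q, SymPow A F p →ₗ[A] SymPow A F q →ₗ[A] ∀ k, SymPow A F k) : Prop :=
  ∀ (p q : ℕ) (m : Fin p → F) (m' : Fin q → F),
    mul p q (mkS A F m) (mkS A F m') = Pi.single (p + q) (mkS A F (appendWord F m m'))

/-- `π` is the family of natural maps `R^{n+1}(F) = S^n(F) ⊗ F → S^{n+1}(F)`. -/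
def IsPi (π : ∀ n, RPow A F n →ₗ[A] SymPow A F (n + 1)) : Prop :=
  ∀ (n : ℕ) (m : Fin n → F) (v : F),
    π n (mkS A F m ⊗ₜ[A] v) = mkS A F (Fin.snoc m v)

/-- `T = (T₀, T₁, …)` is a (full) extended `D`-connection:  `T₀ = id_F` (under
`F ≅ R¹(F)`), and `T_i(am) = a T_i(m) + ∑_{j=1}^i (1/j) T_{j-1}(D a) T_{i-j}(m)`. -/
def IsExtConn [Algebra ℚ A] (D : A → F)
    (mul : ∀ p q, RPow A F p →ₗ[A] RPow A F q →ₗ[A] ∀ k, RPow A F k)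
    (T : ∀ i, F →+ RPow A F i) : Prop :=
  (∀ m : F, T 0 m = mkS A F (fun i : Fin 0 => i.elim0) ⊗ₜ[A] m) ∧
  ∀ (i : ℕ), 1 ≤ i → ∀ (a : A) (m : F),
    Pi.single i (T i (a • m))
      = Pi.single i (a • T i m)
        + ∑ j ∈ Finset.Icc 1 i,
            algebraMap ℚ A (1 / (j : ℚ)) •
              mul (j - 1) (i - j) (T (j - 1) (D a)) (T (i - j) m)

/-- `T = (T₀, …, T_N)` is an extended `D`-connection up to order `N`. -/
def IsExtConnTo [Algebra ℚ A] (D : A → F)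
    (mul : ∀ p q, RPow A F p →ₗ[A] RPow A F q →ₗ[A] ∀ k, RPow A F k)
    (N : ℕ) (T : ∀ i, F →+ RPow A F i) : Prop :=
  (∀ m : F, T 0 m = mkS A F (fun i : Fin 0 => i.elim0) ⊗ₜ[A] m) ∧
  ∀ (i : ℕ), 1 ≤ i → i ≤ N → ∀ (a : A) (m : F),
    Pi.single i (T i (a • m))
      = Pi.single i (a • T i m)
        + ∑ j ∈ Finset.Icc 1 i,
            algebraMap ℚ A (1 / (j : ℚ)) •
              mul (j - 1) (i - j) (T (j - 1) (D a)) (T (i - j) m)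

/-- The wedge map `F ⊗_A F →  Λ(F)`, `u ⊗ v ↦ u ∧ v`; an element of `F ⊗ F` maps to
zero in `Λ²(F)` iff its image under this map is zero. -/
def wedgeMap : F ⊗[A] F →ₗ[A] ExteriorAlgebra A F :=
  TensorProduct.lift
    ((LinearMap.mul A (ExteriorAlgebra A F)).compl₁₂ (ExteriorAlgebra.ι A) (ExteriorAlgebra.ι A))


/-- The word obtained from `m₀ ⋯ m_n` by replacing the letter `m_i` by the two
letters `u v`. -/
def insWord {n : ℕ} (m : Fin (n + 1) → F) (i : Fin (n + 1)) (u v : F) :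
    Fin (n + 2) → F := fun j =>
  if _h1 : j.val < i.val then m ⟨j.val, by have := i.isLt; omega⟩
  else if j.val = i.val then u
  else if j.val = i.val + 1 then v
  else m ⟨j.val - 1, by have := j.isLt; omega⟩

/-! The operator `∇` obeys two Leibniz rules on `R(F)`: `∇(a x) = a ∇x + D(a) x`, which is the
connection rule for `γ`, and `∇(x y) = (∇x) y + x (∇y)`, since `∇` differentiates one letter of a
word at a time. As `D` kills `ℚ`, `∇` commutes with rational scalars, and `∇ T_k = (k + 1) T_{k+1}`.
Applying `∇` to the identity for `T_{n+1}(a m)` therefore yields `(n + 2)` times the identity for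
`T_{n+2}(a m)`: writing the correction term as `∑_{p + q = n} (1/(p+1)) T_p(D a) T_q(m)`, the two
sums produced by the product rule recombine through `(n + 2)/(p + 1) = 1 + q/(p + 1)` for
`p + q = n + 1`. -/

open Finset

variable {A F}

lemma mkS_comp_perm {n : ℕ} (m : Fin n → F) (e : Equiv.Perm (Fin n)) :
    mkS A F (m ∘ e) = mkS A F m :=
  (Submodule.Quotient.eq _).mpr <| Submodule.subset_span
    ⟨m ∘ e, e⁻¹, by simp [Function.comp_assoc]⟩

lemma single_mkS_tmul_eq {n n' : ℕ} (e : Fin n' ≃ Fin n) {s : Fin n → F} {s' : Fin n' → F}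
    (hs : ∀ j, s' j = s (e j)) (v : F) :
    (Pi.single n (mkS A F s ⊗ₜ[A] v) : ∀ k, RPow A F k)
      = Pi.single n' (mkS A F s' ⊗ₜ[A] v) := by
  obtain rfl : n' = n := by simpa using Fintype.card_congr e
  rw [show s' = s ∘ e from funext hs, mkS_comp_perm]

lemma single_mkR_congr {n n' : ℕ} (h : n = n') {w : Fin (n + 1) → F} {w' : Fin (n' + 1) → F}
    (hw : ∀ j, w j = w' (Fin.cast (by omega) j)) :
    (Pi.single n (mkR A F w) : ∀ k, RPow A F k) = Pi.single n' (mkR A F w') := by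
  subst h
  rw [show w = w' from funext hw]

lemma mkR_smul_last {n : ℕ} (m : Fin (n + 1) → F) (a : A) :
    a • mkR A F m = mkR A F (Function.update m (Fin.last n) (a • m (Fin.last n))) := by
  simp [mkR, TensorProduct.tmul_smul]

lemma mkS_tmul_eq_mkR {n : ℕ} (s : Fin n → F) (v : F) :
    mkS A F s ⊗ₜ[A] v = mkR A F (Fin.snoc s v) := by
  simp [mkR]

lemma RPow.induction_on {k : ℕ} {P : RPow A F k → Prop} (x : RPow A F k) (zero : P 0)
    (word : ∀ m : Fin (k + 1) → F, P (mkR A F m))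
    (add : ∀ x y, P x → P y → P (x + y)) : P x := by
  induction x using TensorProduct.induction_on with
  | zero => exact zero
  | add x y hx hy => exact add x y hx hy
  | tmul s v =>
    obtain ⟨t, rfl⟩ := Submodule.Quotient.mk_surjective _ s
    induction t using PiTensorProduct.induction_on with
    | smul_tprod a m =>
      rw [Submodule.Quotient.mk_smul, TensorProduct.smul_tmul, ← mkS.eq_def, mkS_tmul_eq_mkR]
      exact word _
    | add t t' ht ht' =>
      rw [Submodule.Quotient.mk_add, TensorProduct.add_tmul]
      exact add _ _ ht ht'

def concatWord {α : Type*} {p q : ℕ} (w : Fin (p + 1) → α) (w' : Fin (q + 1) → α) :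
    Fin (p + q + 1 + 1) → α := fun j =>
  if h : j.val < p + 1 then w ⟨j.val, h⟩ else w' ⟨j.val - (p + 1), by omega⟩

lemma concatWord_left {α : Type*} {p q : ℕ} (w : Fin (p + 1) → α) (w' : Fin (q + 1) → α)
    (i : Fin (p + 1)) : concatWord w w' ⟨i, by omega⟩ = w i := by
  rw [concatWord, dif_pos i.isLt]

lemma concatWord_right {α : Type*} {p q : ℕ} (w : Fin (p + 1) → α) (w' : Fin (q + 1) → α)
    (i : Fin (q + 1)) : concatWord w w' ⟨p + 1 + i, by omega⟩ = w' i := by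
  rw [concatWord, dif_neg (show ¬p + 1 + (i : ℕ) < p + 1 by omega)]
  exact congrArg w' (Fin.ext (by simp))

def IsInsertion
    (ins : ∀ k, (Fin (k + 1) → F) → Fin (k + 1) → F ⊗[A] F →ₗ[A] RPow A F (k + 1)) : Prop :=
  ∀ k m i u v, ins k m i (u ⊗ₜ[A] v) = mkR A F (insWord F m i u v)

def IsDConnection (D : A → F) (γ : F →+ F ⊗[A] F) : Prop :=
  ∀ (a : A) (m : F), γ (a • m) = D a ⊗ₜ[A] m + a • γ m

def IsNabla (γ : F →+ F ⊗[A] F)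
    (ins : ∀ k, (Fin (k + 1) → F) → Fin (k + 1) → F ⊗[A] F →ₗ[A] RPow A F (k + 1))
    (Del : ∀ k, RPow A F k →+ RPow A F (k + 1)) : Prop :=
  ∀ k (m : Fin (k + 1) → F), Del k (mkR A F m) = ∑ i : Fin (k + 1), ins k m i (γ (m i))

/-- Working in `∏ₖ R^{k+1}(F)`, where `mul` takes its values, rather than degree by degree avoids
transport along equalities of degrees such as `(j - 1) + (i - j) + 1 = i`. -/
def nablaR (Del : ∀ k, RPow A F k →+ RPow A F (k + 1)) :
    (∀ k, RPow A F k) →+ ∀ k, RPow A F k where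
  toFun f k := match k with
    | 0 => 0
    | k + 1 => Del k (f k)
  map_zero' := by funext k; cases k <;> simp
  map_add' f g := by funext k; cases k <;> simp

def IsDividedIterate [Algebra ℚ A] (Del : ∀ k, RPow A F k →+ RPow A F (k + 1))
    (T : ∀ i, F →+ RPow A F i) : Prop :=
  ∀ i m, T (i + 1) m = algebraMap ℚ A (1 / (i + 1 : ℚ)) • Del i (T i m)

def extConnSum [Algebra ℚ A] (mul : ∀ p q, RPow A F p →ₗ[A] RPow A F q →ₗ[A] ∀ k, RPow A F k)
    (T : ∀ i, F →+ RPow A F i) (x m : F) (n : ℕ) : ∀ k, RPow A F k :=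
  ∑ pq ∈ antidiagonal n,
    algebraMap ℚ A (1 / (pq.1 + 1 : ℚ)) • mul pq.1 pq.2 (T pq.1 x) (T pq.2 m)

lemma extConnSum_eq_sum_Icc [Algebra ℚ A]
    (mul : ∀ p q, RPow A F p →ₗ[A] RPow A F q →ₗ[A] ∀ k, RPow A F k)
    (T : ∀ i, F →+ RPow A F i) (x m : F) (n : ℕ) :
    extConnSum mul T x m n
      = ∑ j ∈ Icc 1 (n + 1), algebraMap ℚ A (1 / (j : ℚ)) •
          mul (j - 1) (n + 1 - j) (T (j - 1) x) (T (n + 1 - j) m) := by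
  rw [extConnSum, Nat.sum_antidiagonal_eq_sum_range_succ_mk, ← Ico_add_one_right_eq_Icc,
    sum_Ico_eq_sum_range, Nat.add_sub_cancel]
  refine sum_congr rfl fun j _ => ?_
  rw [Nat.add_sub_cancel_left, show n + 1 - (1 + j) = n - j by omega, Nat.cast_add, Nat.cast_one,
    add_comm (1 : ℚ)]

lemma Derivation.map_algebraMap_rat [Algebra ℚ A] {B : Type*} [CommRing B] [Algebra B A]
    [Module B F] (D : Derivation B A F) (r : ℚ) : D (algebraMap ℚ A r) = 0 := by
  have hden : (r.den : A) • D (algebraMap ℚ A r) = 0 := by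
    have h := congrArg D (show (r.den : A) * algebraMap ℚ A r = (r.num : A) by
      rw [← _root_.map_natCast (algebraMap ℚ A) r.den, ← map_mul,
        ← _root_.map_intCast (algebraMap ℚ A), Rat.den_mul_eq_num])
    rwa [D.leibniz, D.map_natCast, D.map_intCast, smul_zero, add_zero] at h
  calc D (algebraMap ℚ A r)
      = (algebraMap ℚ A (r.den : ℚ)⁻¹ * r.den) • D (algebraMap ℚ A r) := by
        rw [← _root_.map_natCast (algebraMap ℚ A) r.den, ← map_mul,
          inv_mul_cancel₀ (Nat.cast_ne_zero.mpr r.den_ne_zero), map_one, one_smul]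
    _ = 0 := by rw [mul_smul, hden, smul_zero]

lemma isUnit_algebraMap_natCast_succ [Algebra ℚ A] (k : ℕ) :
    IsUnit (algebraMap ℚ A (k + 1)) :=
  (IsUnit.mk0 _ (Nat.cast_add_one_ne_zero k)).map _

variable {γ : F →+ F ⊗[A] F}
  {ins : ∀ k, (Fin (k + 1) → F) → Fin (k + 1) → F ⊗[A] F →ₗ[A] RPow A F (k + 1)}
  {Del : ∀ k, RPow A F k →+ RPow A F (k + 1)} {T : ∀ i, F →+ RPow A F i}
  {mul : ∀ p q, RPow A F p →ₗ[A] RPow A F q →ₗ[A] ∀ k, RPow A F k}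

lemma nablaR_single (k : ℕ) (x : RPow A F k) :
    nablaR Del (Pi.single k x) = Pi.single (k + 1) (Del k x) := by
  funext n
  rcases n with _ | n
  · simp [nablaR]
  · by_cases h : n = k
    · subst h; simp [nablaR]
    · simp [nablaR, h]

lemma mul_mkR_mkR (hmul : IsMulR A F mul) {p q : ℕ} (w : Fin (p + 1) → F)
    (w' : Fin (q + 1) → F) :
    mul p q (mkR A F w) (mkR A F w') = Pi.single (p + q + 1) (mkR A F (concatWord w w')) := by
  rw [mkR, mkR, hmul, mkR]
  have hlast : concatWord w w' (Fin.last _) = w' (Fin.last q) := by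
    rw [concatWord, dif_neg (by simp)]
    exact congrArg w' (Fin.ext (by simp))
  rw [hlast]
  refine congrArg (fun s => (Pi.single _ (mkS A F s ⊗ₜ[A] w' (Fin.last q)) : ∀ k, RPow A F k))
    (funext fun j => ?_)
  simp only [joinWord, concatWord, Fin.val_castSucc]
  split_ifs <;> first | rfl | omega | exact congrArg w (Fin.ext (by simp; omega))

lemma ins_update_last_castSucc (hins : IsInsertion ins) {k : ℕ} (m : Fin (k + 1) → F) (a : A)
    (j : Fin k) :
    ins k (Function.update m (Fin.last k) (a • m (Fin.last k))) j.castSucc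
      = a • ins k m j.castSucc := by
  refine TensorProduct.ext' fun u v => ?_
  rw [hins, LinearMap.smul_apply, hins, mkR_smul_last]
  congr 1
  funext x
  simp only [insWord, Function.update_apply, Fin.val_castSucc, Fin.val_last, Fin.ext_iff]
  split_ifs <;> first | rfl | omega

lemma ins_update_last_last (hins : IsInsertion ins) {k : ℕ} (m : Fin (k + 1) → F) (z : F) :
    ins k (Function.update m (Fin.last k) z) (Fin.last k) = ins k m (Fin.last k) := by
  refine TensorProduct.ext' fun u v => ?_
  rw [hins, hins]
  congr 1
  funext x
  simp only [insWord, Function.update_apply, Fin.val_last, Fin.ext_iff]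
  split_ifs <;> first | rfl | omega

lemma single_ins_last (hins : IsInsertion ins) (hmul : IsMulR A F mul) {k : ℕ}
    (m : Fin (k + 1) → F) (u : F) :
    (Pi.single (k + 1) (ins k m (Fin.last k) (u ⊗ₜ[A] m (Fin.last k))) : ∀ k, RPow A F k)
      = mul 0 k (mkS A F (fun i : Fin 0 => i.elim0) ⊗ₜ[A] u) (mkR A F m) := by
  rw [mkR, hmul, hins, mkR]
  have hlast : insWord F m (Fin.last k) u (m (Fin.last k)) (Fin.last (k + 1))
      = m (Fin.last k) := by
    simp [insWord]
  rw [hlast]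
  refine (single_mkS_tmul_eq ((finRotate (k + 1)).trans (finCongr (by omega)))
    (fun j => ?_) _).symm
  simp only [insWord, joinWord, Equiv.trans_apply, finRotate_apply, finCongr_apply,
    Fin.val_cast, Fin.val_add_one, Fin.val_castSucc, Fin.val_last, Fin.ext_iff]
  split_ifs <;> first | rfl | omega

lemma mul_ins_left (hins : IsInsertion ins) (hmul : IsMulR A F mul) {p q : ℕ}
    (w : Fin (p + 1) → F) (w' : Fin (q + 1) → F) (i : Fin (p + 1)) (t : F ⊗[A] F) :
    mul (p + 1) q (ins p w i t) (mkR A F w')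
      = Pi.single (p + q + 1 + 1) (ins (p + q + 1) (concatWord w w') ⟨i, by omega⟩ t) := by
  induction t using TensorProduct.induction_on with
  | zero => simp
  | add t t' ht ht' => simp only [map_add, LinearMap.add_apply, ht, ht', Pi.single_add]
  | tmul u v =>
    rw [hins, hins, mul_mkR_mkR hmul]
    refine single_mkR_congr (by omega) fun j => ?_
    simp only [concatWord, insWord, Fin.val_cast]
    split_ifs <;> first | rfl | omega | exact congrArg _ (Fin.ext (by dsimp only; omega))

lemma mul_ins_right (hins : IsInsertion ins) (hmul : IsMulR A F mul) {p q : ℕ}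
    (w : Fin (p + 1) → F) (w' : Fin (q + 1) → F) (i : Fin (q + 1)) (t : F ⊗[A] F) :
    mul p (q + 1) (mkR A F w) (ins q w' i t)
      = Pi.single (p + q + 1 + 1)
          (ins (p + q + 1) (concatWord w w') ⟨p + 1 + i, by omega⟩ t) := by
  induction t using TensorProduct.induction_on with
  | zero => simp
  | add t t' ht ht' => simp only [map_add, ht, ht', Pi.single_add]
  | tmul u v =>
    rw [hins, hins, mul_mkR_mkR hmul]
    refine single_mkR_congr (by omega) fun j => ?_
    simp only [concatWord, insWord, Fin.val_cast]
    split_ifs <;> first | rfl | omega | exact congrArg _ (Fin.ext (by dsimp only; omega))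

lemma nablaR_single_smul {D : A → F} (hγ : IsDConnection D γ) (hins : IsInsertion ins)
    (hDel : IsNabla γ ins Del) (hmul : IsMulR A F mul) (k : ℕ) (a : A) (x : RPow A F k) :
    nablaR Del (Pi.single k (a • x))
      = a • nablaR Del (Pi.single k x)
        + mul 0 k (mkS A F (fun i : Fin 0 => i.elim0) ⊗ₜ[A] D a) x := by
  induction x using RPow.induction_on with
  | zero => simp
  | add x y hx hy => simp only [smul_add, Pi.single_add, map_add, hx, hy]; abel
  | word m =>
    rw [mkR_smul_last, nablaR_single, nablaR_single, hDel, hDel, Fin.sum_univ_castSucc,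
      Fin.sum_univ_castSucc, Function.update_self, ins_update_last_last hins, hγ, map_add,
      map_smul, ← single_ins_last hins hmul]
    simp only [Function.update_of_ne (Fin.castSucc_lt_last _).ne, ins_update_last_castSucc hins,
      LinearMap.smul_apply, ← Finset.smul_sum, Pi.single_add, Pi.single_smul, smul_add]
    abel

lemma nablaR_mul (hins : IsInsertion ins) (hDel : IsNabla γ ins Del) (hmul : IsMulR A F mul)
    {p q : ℕ} (x : RPow A F p) (y : RPow A F q) :
    nablaR Del (mul p q x y) = mul (p + 1) q (Del p x) y + mul p (q + 1) x (Del q y) := by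
  induction x using RPow.induction_on with
  | zero => simp
  | add x x' hx hx' => simp only [map_add, LinearMap.add_apply, hx, hx']; abel
  | word w =>
    induction y using RPow.induction_on with
    | zero => simp
    | add y y' hy hy' => simp only [map_add, hy, hy']; abel
    | word w' =>
      rw [mul_mkR_mkR hmul, nablaR_single, hDel, hDel, hDel, map_sum, map_sum,
        LinearMap.sum_apply]
      simp only [mul_ins_left hins hmul, mul_ins_right hins hmul, ← AddMonoidHom.single_apply,
        ← map_sum, ← map_add]
      congr 1
      rw [← (finCongr (show p + 1 + (q + 1) = p + q + 1 + 1 by omega)).sum_comp,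
        Fin.sum_univ_add]
      congr 1 <;> refine Fintype.sum_congr _ _ fun i => ?_
      · exact congrArg (fun z => ins _ _ ⟨i, by omega⟩ (γ z)) (concatWord_left w w' i)
      · exact congrArg (fun z => ins _ _ ⟨p + 1 + i, by omega⟩ (γ z)) (concatWord_right w w' i)

section Rational

variable [Algebra ℚ A]

lemma Del_T (hT : IsDividedIterate Del T) (k : ℕ) (x : F) :
    Del k (T k x) = algebraMap ℚ A (k + 1) • T (k + 1) x := by
  rw [hT, smul_smul, ← map_mul, mul_one_div_cancel (Nat.cast_add_one_ne_zero k), map_one,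
    one_smul]

lemma nablaR_single_T (hT : IsDividedIterate Del T) (k : ℕ) (x : F) :
    nablaR Del (Pi.single k (T k x))
      = algebraMap ℚ A (k + 1) • Pi.single (k + 1) (T (k + 1) x) := by
  rw [nablaR_single, Del_T hT, Pi.single_smul]

lemma nablaR_mul_T (hins : IsInsertion ins) (hDel : IsNabla γ ins Del) (hmul : IsMulR A F mul)
    (hT : IsDividedIterate Del T) (p q : ℕ) (x y : F) :
    nablaR Del (mul p q (T p x) (T q y))
      = algebraMap ℚ A (p + 1) • mul (p + 1) q (T (p + 1) x) (T q y)
        + algebraMap ℚ A (q + 1) • mul p (q + 1) (T p x) (T (q + 1) y) := by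
  rw [nablaR_mul hins hDel hmul, Del_T hT, Del_T hT, map_smul, map_smul, LinearMap.smul_apply]

lemma nablaR_smul_single_T {D : A → F} (hγ : IsDConnection D γ) (hins : IsInsertion ins)
    (hDel : IsNabla γ ins Del) (hmul : IsMulR A F mul)
    (hT0 : ∀ m : F, T 0 m = mkS A F (fun i : Fin 0 => i.elim0) ⊗ₜ[A] m)
    (hT : IsDividedIterate Del T) (k : ℕ) (a : A) (m : F) :
    nablaR Del (a • Pi.single k (T k m))
      = algebraMap ℚ A (k + 1) • (a • Pi.single (k + 1) (T (k + 1) m))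
        + mul 0 k (T 0 (D a)) (T k m) := by
  rw [← Pi.single_smul, nablaR_single_smul hγ hins hDel hmul, ← hT0, nablaR_single_T hT,
    smul_comm]

variable {B : Type*} [CommRing B] [Algebra B A] [Module B F] {D : Derivation B A F}

lemma nablaR_algebraMap_smul (hγ : IsDConnection D γ) (hins : IsInsertion ins)
    (hDel : IsNabla γ ins Del) (hmul : IsMulR A F mul) (r : ℚ) (f : ∀ k, RPow A F k) :
    nablaR Del (algebraMap ℚ A r • f) = algebraMap ℚ A r • nablaR Del f := by
  funext k
  rcases k with _ | k
  · simp [nablaR]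
  · have h := congrFun (nablaR_single_smul hγ hins hDel hmul k (algebraMap ℚ A r) (f k)) (k + 1)
    simpa [nablaR_single, D.map_algebraMap_rat, nablaR] using h

lemma nablaR_extConnSum (hγ : IsDConnection D γ) (hins : IsInsertion ins)
    (hDel : IsNabla γ ins Del) (hmul : IsMulR A F mul) (hT : IsDividedIterate Del T)
    (x m : F) (n : ℕ) :
    mul 0 (n + 1) (T 0 x) (T (n + 1) m) + nablaR Del (extConnSum mul T x m n)
      = algebraMap ℚ A (n + 2) • extConnSum mul T x m (n + 1) := by
  set E : ℕ × ℕ → ∀ k, RPow A F k := fun pq => mul pq.1 pq.2 (T pq.1 x) (T pq.2 m)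
  have hnabla : nablaR Del (extConnSum mul T x m n)
      = ∑ pq ∈ antidiagonal n, (E (pq.1 + 1, pq.2)
          + algebraMap ℚ A ((pq.2 + 1) / (pq.1 + 1)) • E (pq.1, pq.2 + 1)) := by
    rw [extConnSum, map_sum]
    refine sum_congr rfl fun pq _ => ?_
    rw [nablaR_algebraMap_smul hγ hins hDel hmul, nablaR_mul_T hins hDel hmul hT, smul_add,
      smul_smul, smul_smul, ← map_mul, ← map_mul, one_div_mul_cancel (by positivity), map_one,
      one_smul, one_div_mul_eq_div]
  have hcoeff : ∀ pq ∈ antidiagonal (n + 1),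
      algebraMap ℚ A (n + 2) • (algebraMap ℚ A (1 / (pq.1 + 1 : ℚ)) • E pq)
        = E pq + algebraMap ℚ A (pq.2 / (pq.1 + 1)) • E pq := by
    intro pq hpq
    have hpq' : (pq.1 + pq.2 : ℚ) = n + 1 := by
      exact_mod_cast (HasAntidiagonal.mem_antidiagonal.mp hpq)
    rw [smul_smul, ← map_mul]
    nth_rw 2 [← one_smul A (E pq)]
    rw [← add_smul, ← map_one (algebraMap ℚ A), ← map_add]
    congr 2
    field_simp
    linarith
  have hfirst : ∑ pq ∈ antidiagonal (n + 1), E pq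
      = E (0, n + 1) + ∑ pq ∈ antidiagonal n, E (pq.1 + 1, pq.2) :=
    Nat.sum_antidiagonal_succ
  have hsecond : ∑ pq ∈ antidiagonal (n + 1), algebraMap ℚ A (pq.2 / (pq.1 + 1)) • E pq
      = ∑ pq ∈ antidiagonal n,
          algebraMap ℚ A ((pq.2 + 1) / (pq.1 + 1)) • E (pq.1, pq.2 + 1) := by
    rw [Nat.sum_antidiagonal_succ']
    simp
  calc mul 0 (n + 1) (T 0 x) (T (n + 1) m) + nablaR Del (extConnSum mul T x m n)
      = E (0, n + 1) + ∑ pq ∈ antidiagonal n, E (pq.1 + 1, pq.2)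
          + ∑ pq ∈ antidiagonal n,
              algebraMap ℚ A ((pq.2 + 1) / (pq.1 + 1)) • E (pq.1, pq.2 + 1) := by
        rw [hnabla, sum_add_distrib, add_assoc]
    _ = ∑ pq ∈ antidiagonal (n + 1), (E pq + algebraMap ℚ A (pq.2 / (pq.1 + 1)) • E pq) := by
        rw [sum_add_distrib, hfirst, hsecond]
    _ = algebraMap ℚ A (n + 2) • extConnSum mul T x m (n + 1) := by
        rw [extConnSum, smul_sum]
        exact sum_congr rfl fun pq hpq => (hcoeff pq hpq).symm

lemma single_T_smul (hγ : IsDConnection D γ) (hins : IsInsertion ins)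
    (hDel : IsNabla γ ins Del) (hmul : IsMulR A F mul)
    (hT0 : ∀ m : F, T 0 m = mkS A F (fun i : Fin 0 => i.elim0) ⊗ₜ[A] m)
    (hT : IsDividedIterate Del T) (a : A) (m : F) (n : ℕ) :
    Pi.single (n + 1) (T (n + 1) (a • m))
      = a • Pi.single (n + 1) (T (n + 1) m) + extConnSum mul T (D a) m n := by
  induction n with
  | zero =>
    refine ((isUnit_algebraMap_natCast_succ (A := A) 0).smul_left_cancel).mp ?_
    rw [← nablaR_single_T hT, hT0, TensorProduct.tmul_smul, ← hT0, Pi.single_smul,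
      nablaR_smul_single_T hγ hins hDel hmul hT0 hT, smul_add]
    simp [extConnSum]
  | succ n ih =>
    refine ((isUnit_algebraMap_natCast_succ (A := A) (n + 1)).smul_left_cancel).mp ?_
    rw [← nablaR_single_T hT, ih, map_add, nablaR_smul_single_T hγ hins hDel hmul hT0 hT,
      add_assoc, nablaR_extConnSum hγ hins hDel hmul hT, smul_add,
      show ((n : ℚ) + 2) = ((n + 1 : ℕ) : ℚ) + 1 by push_cast; ring]

end Rational

theorem iterate_isExtConn_general [Algebra ℚ A] (B : Type) [CommRing B] [Algebra B A]
    [Module B F]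
    (D : Derivation B A F)
    (γ : F →+ F ⊗[A] F)
    (hγ : ∀ (a : A) (m : F), γ (a • m) = D a ⊗ₜ[A] m + a • γ m)
    (ins : ∀ (k : ℕ) (m : Fin (k + 1) → F) (i : Fin (k + 1)),
      F ⊗[A] F →ₗ[A] RPow A F (k + 1))
    (hins : ∀ k m i u v, ins k m i (u ⊗ₜ[A] v) = mkR A F (insWord F m i u v))
    (Del : ∀ k, RPow A F k →+ RPow A F (k + 1))
    (hDel : ∀ (k : ℕ) (m : Fin (k + 1) → F),
      Del k (mkR A F m) = ∑ i : Fin (k + 1), ins k m i (γ (m i)))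
    (mul : ∀ p q, RPow A F p →ₗ[A] RPow A F q →ₗ[A] ∀ k, RPow A F k)
    (hmul : IsMulR A F mul)
    (T : ∀ i, F →+ RPow A F i)
    (hT0 : ∀ m : F, T 0 m = mkS A F (fun i : Fin 0 => i.elim0) ⊗ₜ[A] m)
    (hTsucc : ∀ (i : ℕ) (m : F),
      T (i + 1) m = algebraMap ℚ A (1 / (i + 1 : ℚ)) • Del i (T i m)) :
    IsExtConn A F (⇑D) mul T := by
  refine ⟨hT0, fun i hi a m => ?_⟩
  obtain ⟨n, rfl⟩ := Nat.exists_eq_add_of_le' hi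
  rw [Pi.single_smul, single_T_smul hγ hins hDel hmul hT0 hTsucc, extConnSum_eq_sum_Icc]

/-- Let `γ` be a `D`-connection, `∇` (`Del`) the induced operator on
`R₊(F)`, and `T₀ := id_F`, `T_n := (1/n!)∇ⁿ|_F` (equivalently `T_{n+1} = (1/(n+1)) ∇ ∘ Tₙ`).
Then for every `i ≥ 1`, `a ∈ A`, `m ∈ F`:
`T_i(am) = a T_i(m) + ∑_{j=1}^i (1/j) T_{j-1}(D a) T_{i-j}(m)`,
i.e. `(T₀, T₁, …)` is an extended `D`-connection. -/
theorem iterate_isExtConn [Algebra ℚ A] (B : Type) [CommRing B] [Algebra B A]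
    [Module B F] [IsScalarTower B A F]
    (D : Derivation B A F)
    (γ : F →+ F ⊗[A] F)
    (hγ : ∀ (a : A) (m : F), γ (a • m) = D a ⊗ₜ[A] m + a • γ m)
    (ins : ∀ (k : ℕ) (m : Fin (k + 1) → F) (i : Fin (k + 1)),
      F ⊗[A] F →ₗ[A] RPow A F (k + 1))
    (hins : ∀ k m i u v, ins k m i (u ⊗ₜ[A] v) = mkR A F (insWord F m i u v))
    (Del : ∀ k, RPow A F k →+ RPow A F (k + 1))
    (hDel : ∀ (k : ℕ) (m : Fin (k + 1) → F),
      Del k (mkR A F m) = ∑ i : Fin (k + 1), ins k m i (γ (m i)))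
    (mul : ∀ p q, RPow A F p →ₗ[A] RPow A F q →ₗ[A] ∀ k, RPow A F k)
    (hmul : IsMulR A F mul)
    (T : ∀ i, F →+ RPow A F i)
    (hT0 : ∀ m : F, T 0 m = mkS A F (fun i : Fin 0 => i.elim0) ⊗ₜ[A] m)
    (hTsucc : ∀ (i : ℕ) (m : F),
      T (i + 1) m = algebraMap ℚ A (1 / (i + 1 : ℚ)) • Del i (T i m)) :
    IsExtConn A F (⇑D) mul T :=
  iterate_isExtConn_general B D γ hγ ins hins Del hDel mul hmul T hT0 hTsucc

end
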